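/- Let n ≥ 1 and let π be a Baxter permutation of {1, …, n+1}. Then A(π) is an n×n permutation matrix: every entry of A(π) is 0 or 1, and each row and each column contains exactly one entry equal to 1. -/

import Mathlib

/-- `(i,j)` is a box for the permutation `π` with inverse `σ`:
`min(π i, π (i+1)) ≤ j < max(π i, π (i+1))` and `min(σ j, σ (j+1)) ≤ i < max(σ j, σ (j+1))`. -/
def IsBox (π σ : ℕ → ℕ) (i j : ℕ) : Prop :=
  min (π i) (π (i+1)) ≤ j ∧ j < max (π i) (π (i+1)) ∧
  min (σ j) (σ (j+1)) ≤ i ∧ i < max (σ j) (σ (j+1))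

instance (π σ : ℕ → ℕ) (i j : ℕ) : Decidable (IsBox π σ i j) := by
  unfold IsBox; infer_instance

/-- A box `(i,j)` is windmilled if exactly one of `π i > j` and `σ j > i` holds. -/
def Windmilled (π σ : ℕ → ℕ) (i j : ℕ) : Prop :=
  IsBox π σ i j ∧ Xor' (j < π i) (i < σ j)

instance (π σ : ℕ → ℕ) (i j : ℕ) : Decidable (Windmilled π σ i j) := by
  unfold Windmilled; exact inferInstanceAs (Decidable (IsBox π σ i j ∧ Xor (j < π i) (i < σ j)))

/-- The matrix `A(π)`: `-1` on windmilled boxes, `1` on non-windmilled boxes, `0` elsewhere. -/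
def AMat (π σ : ℕ → ℕ) (i j : ℕ) : ℤ :=
  if Windmilled π σ i j then -1 else if IsBox π σ i j then 1 else 0

/-- Baxter condition (dividing-line form) for a permutation `π` of `{1, …, n+1}`
with inverse `σ`. -/
def IsBaxter (n : ℕ) (π σ : ℕ → ℕ) : Prop :=
  ∀ i ∈ Finset.Icc 1 n,
    ∃ c, min (π i) (π (i+1)) ≤ c ∧ c < max (π i) (π (i+1)) ∧
      ∀ d, min (π i) (π (i+1)) < d → d < max (π i) (π (i+1)) →
        (π i < π (i+1) → (d ≤ c → σ d < i) ∧ (c < d → σ d > i + 1)) ∧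
        (π (i+1) < π i → (d ≤ c → σ d > i + 1) ∧ (c < d → σ d < i))

/-! In row `i` of a Baxter permutation, `π⁻¹ d ≤ i` holds for the values `d` between `π i` and
`π (i+1)` exactly on one side of the dividing value `c`. Hence `c` is the only column carrying a
box in row `i`, and that box is not windmilled. If a column `j` carried boxes in two rows, then
between them `π` would cross `j` in the opposite direction, and the row where it does so would
carry a windmilled box. So `A(π)` has entries `0, 1`, exactly one `1` per row and at most one per
column, and an injective map from `{1, …, n}` to itself is onto. -/

lemma Nat.exists_not_and_succ_between {P : ℕ → Prop} {a b : ℕ} (hab : a ≤ b) (ha : ¬ P a)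
    (hb : P b) : ∃ d, a ≤ d ∧ d < b ∧ ¬ P d ∧ P (d + 1) := by
  obtain ⟨k, hk, hk1⟩ := Nat.exists_not_and_succ_of_not_zero_of_exists
    (p := fun k => P (a + k) ∧ a + k ≤ b) (fun h => ha h.1)
    ⟨b - a, by simpa [Nat.add_sub_cancel' hab] using hb⟩
  exact ⟨a + k, by omega, by omega, fun h => hk ⟨h, by omega⟩, hk1.1⟩

theorem Finset.existsUnique_col_of_existsUnique_row {α : Type*} {s : Finset α} {R : α → α → Prop}
    (hrow : ∀ i ∈ s, ∃! j, j ∈ s ∧ R i j)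
    (hcol : ∀ j, ∀ i ∈ s, ∀ i' ∈ s, R i j → R i' j → i = i') :
    ∀ j ∈ s, ∃! i, i ∈ s ∧ R i j := by
  choose! c hc _ using hrow
  intro j hj
  obtain ⟨i, hi, rfl⟩ := Finset.surjOn_of_injOn_of_card_le c (fun i hi => (hc i hi).1)
    (fun i hi i' hi' h => hcol _ i hi i' hi' (hc i hi).2 (h ▸ (hc i' hi').2)) le_rfl hj
  exact ⟨i, ⟨hi, (hc i hi).2⟩, fun i' ⟨hi', h⟩ => hcol _ i' hi' i hi h (hc i hi).2⟩

theorem windmilled_iff {f g : ℕ → ℕ} {i j : ℕ} :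
    Windmilled f g i j ↔ IsBox f g i j ∧ ¬ (j < f i ↔ i < g j) :=
  and_congr_right fun _ => xor_iff_not_iff _ _

theorem AMat_eq_one_iff {π σ : ℕ → ℕ} {i j : ℕ} :
    AMat π σ i j = 1 ↔ IsBox π σ i j ∧ ¬ Windmilled π σ i j := by
  unfold AMat
  split_ifs <;> simp_all

theorem AMat_eq_zero_or_one {π σ : ℕ → ℕ} {i j : ℕ} (h : ¬ Windmilled π σ i j) :
    AMat π σ i j = 0 ∨ AMat π σ i j = 1 := by
  unfold AMat
  split_ifs <;> simp

theorem not_isBox_of_isBox_of_lt {f g : ℕ → ℕ} {i i' j : ℕ} (hlt : i < i')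
    (hw : ∀ r, i ≤ r → r ≤ i' → ¬ Windmilled f g r j) (h : IsBox f g i j) :
    ¬ IsBox f g i' j := by
  intro h'
  have hwi := hw i le_rfl hlt.le
  have hwi' := hw i' hlt.le le_rfl
  simp only [windmilled_iff, IsBox] at hw hwi hwi' h h'
  rcases le_or_gt (f (i+1)) j with hdesc | hasc
  · obtain ⟨r, hr₁, hr₂, hr, hr'⟩ := Nat.exists_not_and_succ_between (P := fun r => j < f r)
      (a := i+1) (b := i') (by omega) (by omega) (by omega)
    exact hw r (by omega) (by omega) (by omega)
  · obtain ⟨r, hr₁, hr₂, hr, hr'⟩ := Nat.exists_not_and_succ_between (P := fun r => f r ≤ j)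
      (a := i+1) (b := i') (by omega) (by omega) (by omega)
    exact hw r (by omega) (by omega) (by omega)

section Baxter

variable {n : ℕ} {π : Equiv.Perm ℕ}

theorem IsBaxter.symm_le_iff (hbax : IsBaxter n π π.symm) {i : ℕ} (hi : i ∈ Finset.Icc 1 n) :
    ∃ c, min (π i) (π (i+1)) ≤ c ∧ c < max (π i) (π (i+1)) ∧
      ∀ d, min (π i) (π (i+1)) ≤ d → d ≤ max (π i) (π (i+1)) →
        (π.symm d ≤ i ↔ (d ≤ c ↔ π i < π (i+1))) := by
  obtain ⟨c, hc₁, hc₂, hc⟩ := hbax i hi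
  refine ⟨c, hc₁, hc₂, fun d hd₁ hd₂ => ?_⟩
  have hne : π i ≠ π (i+1) := π.injective.ne (by omega)
  rcases eq_or_ne d (π i) with rfl | hdi
  · simp only [Equiv.symm_apply_apply, le_refl, true_iff]
    omega
  rcases eq_or_ne d (π (i+1)) with rfl | hdi'
  · simp only [Equiv.symm_apply_apply]
    omega
  have := hc d (by omega) (by omega)
  omega

theorem IsBaxter.exists_isBox_iff (hbax : IsBaxter n π π.symm) {i : ℕ}
    (hi : i ∈ Finset.Icc 1 n) :
    ∃ c, min (π i) (π (i+1)) ≤ c ∧ c < max (π i) (π (i+1)) ∧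
      ¬ Windmilled π π.symm i c ∧ ∀ j, IsBox π π.symm i j ↔ j = c := by
  obtain ⟨c, hc₁, hc₂, hc⟩ := hbax.symm_le_iff hi
  have hcc := hc c hc₁ hc₂.le
  have hcc' := hc (c+1) (by omega) (by omega)
  refine ⟨c, hc₁, hc₂, ?_, fun j => ⟨fun hbox => ?_, ?_⟩⟩
  · simp only [windmilled_iff, IsBox]
    omega
  · unfold IsBox at hbox
    have hj := hc j (by omega) (by omega)
    have hj' := hc (j+1) (by omega) (by omega)
    omega
  · rintro rfl
    unfold IsBox
    omega

theorem IsBaxter.not_windmilled (hbax : IsBaxter n π π.symm) {i : ℕ} (hi : i ∈ Finset.Icc 1 n)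
    (j : ℕ) : ¬ Windmilled π π.symm i j := by
  obtain ⟨c, -, -, hc, hbox⟩ := hbax.exists_isBox_iff hi
  intro hw
  exact hc ((hbox j).1 hw.1 ▸ hw)

theorem IsBaxter.existsUnique_AMat_eq_one (hbax : IsBaxter n π π.symm)
    (hπ : ∀ k ∈ Finset.Icc 1 (n+1), π k ∈ Finset.Icc 1 (n+1)) {i : ℕ}
    (hi : i ∈ Finset.Icc 1 n) :
    ∃! j, j ∈ Finset.Icc 1 n ∧ AMat π π.symm i j = 1 := by
  obtain ⟨c, hc₁, hc₂, -, hbox⟩ := hbax.exists_isBox_iff hi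
  have hπi := Finset.mem_Icc.1 (hπ i (by simp at hi ⊢; omega))
  have hπi' := Finset.mem_Icc.1 (hπ (i+1) (by simp at hi ⊢; omega))
  refine ⟨c, ⟨Finset.mem_Icc.2 ⟨by omega, by omega⟩, ?_⟩, fun j ⟨_, hj⟩ => ?_⟩
  · exact AMat_eq_one_iff.2 ⟨(hbox c).2 rfl, hbax.not_windmilled hi c⟩
  · exact (hbox j).1 (AMat_eq_one_iff.1 hj).1

theorem IsBaxter.eq_of_AMat_eq_one (hbax : IsBaxter n π π.symm) {i i' j : ℕ}
    (hi : i ∈ Finset.Icc 1 n) (hi' : i' ∈ Finset.Icc 1 n)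
    (h : AMat π π.symm i j = 1) (h' : AMat π π.symm i' j = 1) : i = i' := by
  rw [AMat_eq_one_iff] at h h'
  by_contra hne
  wlog hlt : i < i' generalizing i i'
  · exact this hi' hi h' h (Ne.symm hne) (by omega)
  exact not_isBox_of_isBox_of_lt hlt
    (fun r hr hr' => hbax.not_windmilled (by simp at hi hi' ⊢; omega) j) h.1 h'.1

end Baxter

theorem stmt8_general (n : ℕ) (π : Equiv.Perm ℕ)
    (hπ : ∀ k ∈ Finset.Icc 1 (n+1), π k ∈ Finset.Icc 1 (n+1))
    (hbax : IsBaxter n (⇑π) (⇑π.symm)) :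
    (∀ i ∈ Finset.Icc 1 n, ∀ j ∈ Finset.Icc 1 n,
        AMat (⇑π) (⇑π.symm) i j = 0 ∨ AMat (⇑π) (⇑π.symm) i j = 1) ∧
    (∀ i ∈ Finset.Icc 1 n, ∃! j, j ∈ Finset.Icc 1 n ∧ AMat (⇑π) (⇑π.symm) i j = 1) ∧
    (∀ j ∈ Finset.Icc 1 n, ∃! i, i ∈ Finset.Icc 1 n ∧ AMat (⇑π) (⇑π.symm) i j = 1) := by
  have hrow : ∀ i ∈ Finset.Icc 1 n, ∃! j, j ∈ Finset.Icc 1 n ∧ AMat π π.symm i j = 1 :=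
    fun i hi => hbax.existsUnique_AMat_eq_one hπ hi
  exact ⟨fun i hi j _ => AMat_eq_zero_or_one (hbax.not_windmilled hi j), hrow,
    Finset.existsUnique_col_of_existsUnique_row hrow
      fun _ _ hi _ hi' => hbax.eq_of_AMat_eq_one hi hi'⟩

theorem stmt8 (n : ℕ) (hn : 1 ≤ n) (π : Equiv.Perm ℕ)
    (hπ : ∀ k ∈ Finset.Icc 1 (n+1), π k ∈ Finset.Icc 1 (n+1))
    (hbax : IsBaxter n (⇑π) (⇑π.symm)) :
    (∀ i ∈ Finset.Icc 1 n, ∀ j ∈ Finset.Icc 1 n,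
        AMat (⇑π) (⇑π.symm) i j = 0 ∨ AMat (⇑π) (⇑π.symm) i j = 1) ∧
    (∀ i ∈ Finset.Icc 1 n, ∃! j, j ∈ Finset.Icc 1 n ∧ AMat (⇑π) (⇑π.symm) i j = 1) ∧
    (∀ j ∈ Finset.Icc 1 n, ∃! i, i ∈ Finset.Icc 1 n ∧ AMat (⇑π) (⇑π.symm) i j = 1) :=
  stmt8_general n π hπ hbax
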